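/- arXiv:2404.07412 — 3 statements merged into one kernel-verified Lean document; each statement's English description precedes it below -/
import Mathlib

section
/- Let n ≥ 2, κ ∈ {0, −1}, and let φ : [0,∞) → ℝ be C² with φ' ≤ 0. Suppose T : [0,R] → ℝ is a C² solution on (0,R) of T'' + ((n−1)C_κ/S_κ − φ')T' − (n−1)S_κ^{−2} T = 0 with T(0) = 0, T'(0) = 1, and T > 0 on (0,R). Then T'(t) > 0 for all t ∈ (0,R). -/
open Set

theorem T_deriv_pos (n : ℕ) (hn : 2 ≤ n) (κ : ℝ) (S : ℝ → ℝ)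
    (hS : (κ = 0 ∧ S = fun t => t) ∨ (κ = -1 ∧ S = Real.sinh))
    (φ : ℝ → ℝ) (hφ : ContDiffOn ℝ 2 φ (Ici 0))
    (hφ' : ∀ t ≥ (0 : ℝ), deriv φ t ≤ 0)
    (R : ℝ) (hR : 0 < R) (T : ℝ → ℝ) (hT : ContDiffOn ℝ 2 T (Icc 0 R))
    (hODE : ∀ t ∈ Ioo 0 R,
      deriv (deriv T) t + (((n : ℝ) - 1) * deriv S t / S t - deriv φ t) * deriv T t
        - ((n : ℝ) - 1) / (S t) ^ 2 * T t = 0)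
    (hT0 : T 0 = 0) (hT0' : deriv T 0 = 1) (hTpos : ∀ t ∈ Ioo 0 R, 0 < T t) :
    ∀ t ∈ Ioo 0 R, 0 < deriv T t := by
  set f := derivWithin T (Icc 0 R) with hf
  have hud : UniqueDiffOn ℝ (Icc (0:ℝ) R) := uniqueDiffOn_Icc hR
  have hfc : ContinuousOn f (Icc 0 R) :=
    hT.continuousOn_derivWithin hud (by norm_num)
  have hfeq : ∀ s ∈ Ioo (0:ℝ) R, f s = deriv T s := by
    intro s hs
    exact derivWithin_of_mem_nhds (Icc_mem_nhds hs.1 hs.2)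
  have hf0 : f 0 = 1 := by
    have hdiff : DifferentiableAt ℝ T 0 := by
      by_contra h
      rw [deriv_zero_of_not_differentiableAt h] at hT0'
      norm_num at hT0'
    rw [hf, hdiff.derivWithin (hud 0 ⟨le_refl _, hR.le⟩), hT0']
  -- key: any zero of f in (0,R) leads to contradiction if f > 0 before it... we use minimal zero
  intro t ht
  by_contra hle
  push_neg at hle
  have hft : f t ≤ 0 := by rw [hfeq t ht]; exact hle
  set Z : Set ℝ := {s ∈ Icc 0 t | f s = 0} with hZ
  have hsub : Icc (0:ℝ) t ⊆ Icc 0 R := Icc_subset_Icc le_rfl ht.2.le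
  have hZne : Z.Nonempty := by
    have := intermediate_value_Icc' ht.1.le (hfc.mono hsub)
    have h0 : (0:ℝ) ∈ Icc (f t) (f 0) := ⟨hft, by rw [hf0]; norm_num⟩
    obtain ⟨u, hu, hfu⟩ := this h0
    exact ⟨u, hu, hfu⟩
  have hZclosed : IsClosed Z := by
    have heq : Z = Icc 0 t ∩ f ⁻¹' {0} := by ext s; simp [hZ]
    rw [heq]
    exact (hfc.mono hsub).preimage_isClosed_of_isClosed isClosed_Icc isClosed_singleton
  have hbdd : BddBelow Z := ⟨0, fun s hs => hs.1.1⟩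
  set t₀ := sInf Z with ht₀
  have ht₀mem : t₀ ∈ Z := hZclosed.csInf_mem hZne hbdd
  have ht₀pos : 0 < t₀ := by
    rcases ht₀mem.1.1.lt_or_eq with h | h
    · exact h
    · exfalso
      have h2 := ht₀mem.2
      rw [← h] at h2
      rw [h2] at hf0; norm_num at hf0
  have ht₀R : t₀ ∈ Ioo 0 R := ⟨ht₀pos, lt_of_le_of_lt ht₀mem.1.2 ht.2⟩
  -- f > 0 on [0, t₀)
  have hfpos : ∀ s ∈ Ico (0:ℝ) t₀, 0 < f s := by
    intro s hs
    rcases lt_trichotomy (f s) 0 with h | h | h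
    · exfalso
      have hs' : s ∈ Icc (0:ℝ) t := ⟨hs.1, hs.2.le.trans ht₀mem.1.2⟩
      have := intermediate_value_Icc' hs.1 ((hfc.mono hsub).mono (Icc_subset_Icc le_rfl hs'.2))
      obtain ⟨u, hu, hfu⟩ := this ⟨h.le, by rw [hf0]; norm_num⟩
      have : t₀ ≤ u := csInf_le hbdd ⟨⟨hu.1, hu.2.trans hs'.2⟩, hfu⟩
      linarith [hu.2, hs.2]
    · exfalso
      have : t₀ ≤ s := csInf_le hbdd ⟨⟨hs.1, hs.2.le.trans ht₀mem.1.2⟩, h⟩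
      linarith [hs.2]
    · exact h
  -- ODE at t₀ gives deriv (deriv T) t₀ > 0
  have hft₀ : deriv T t₀ = 0 := by rw [← hfeq t₀ ht₀R]; exact ht₀mem.2
  have hSpos : 0 < S t₀ := by
    rcases hS with ⟨_, rfl⟩ | ⟨_, rfl⟩
    · exact ht₀pos
    · exact Real.sinh_pos_iff.mpr ht₀pos
  have hTt₀ : 0 < T t₀ := hTpos t₀ ht₀R
  have hode := hODE t₀ ht₀R
  rw [hft₀] at hode
  have hc : 0 < deriv (deriv T) t₀ := by
    have : deriv (deriv T) t₀ = ((n : ℝ) - 1) / (S t₀) ^ 2 * T t₀ := by linarith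
    rw [this]
    have hn1 : (0:ℝ) < (n:ℝ) - 1 := by
      have : (2:ℝ) ≤ n := by exact_mod_cast hn
      linarith
    positivity
  -- deriv T differentiable at t₀, f has derivative there
  have hTopen : ContDiffOn ℝ 2 T (Ioo 0 R) := hT.mono Ioo_subset_Icc_self
  have hd1 : ContDiffOn ℝ 1 (deriv T) (Ioo 0 R) :=
    hTopen.deriv_of_isOpen isOpen_Ioo (by norm_num)
  have hdiff2 : DifferentiableAt ℝ (deriv T) t₀ :=
    (hd1.differentiableOn (by norm_num)).differentiableAt (isOpen_Ioo.mem_nhds ht₀R)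
  have hHD : HasDerivAt (deriv T) (deriv (deriv T) t₀) t₀ := hdiff2.hasDerivAt
  have hHDf : HasDerivAt f (deriv (deriv T) t₀) t₀ := by
    apply hHD.congr_of_eventuallyEq
    filter_upwards [isOpen_Ioo.mem_nhds ht₀R] with s hs
    exact hfeq s hs
  -- slope argument
  have hslope := hasDerivAt_iff_tendsto_slope.mp hHDf
  have hev : ∀ᶠ s in nhdsWithin t₀ (Iio t₀), 0 < slope f t₀ s := by
    have := hslope.mono_left (nhdsWithin_mono t₀ (fun s hs => ne_of_lt hs : Iio t₀ ⊆ {t₀}ᶜ))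
    exact this.eventually (eventually_gt_nhds hc)
  have hev2 : ∀ᶠ s in nhdsWithin t₀ (Iio t₀), s ∈ Ioo (0:ℝ) t₀ :=
    Ioo_mem_nhdsLT_of_mem ⟨ht₀pos, le_refl _⟩
  obtain ⟨s, hs1, hs2⟩ := (hev.and hev2).exists
  have hfs : 0 < f s := hfpos s ⟨hs2.1.le, hs2.2⟩
  rw [slope_def_field, ht₀mem.2] at hs1
  have hneg : s - t₀ < 0 := by linarith [hs2.2]
  have := div_neg_of_pos_of_neg (by linarith : (0:ℝ) < f s - 0) hneg
  linarith
end

section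
/- Let n ≥ 2, κ ∈ {0, −1}, and φ : [0,∞) → ℝ be C² with φ' ≤ 0 and φ'' ≤ 0. Let T be the solution of T'' + ((n−1)C_κ/S_κ − φ')T' − (n−1)S_κ^{−2}T = 0, T(0) = 0, T'(0) = 1, with T > 0 and T' > 0 on (0,∞). Define G(t) = (T²(t))' + (n−1)(C_κ(t)/S_κ(t))T²(t) − T²(t)φ'(t). Then G'(t) = 2(T'(t))² + (n−1)T²(t)/S_κ²(t) − T²(t)φ''(t) ≥ 0 for all t > 0, so G is non-decreasing on (0,∞). -/
open Set

theorem G_monotone (n : ℕ) (hn : 2 ≤ n) (κ : ℝ) (S : ℝ → ℝ)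
    (hS : (κ = 0 ∧ S = fun t => t) ∨ (κ = -1 ∧ S = Real.sinh))
    (φ : ℝ → ℝ) (hφ : ContDiffOn ℝ 2 φ (Ici 0))
    (hφ' : ∀ t ≥ (0 : ℝ), deriv φ t ≤ 0)
    (hφ'' : ∀ t ≥ (0 : ℝ), deriv (deriv φ) t ≤ 0)
    (T : ℝ → ℝ) (hT : ContDiffOn ℝ 2 T (Ici 0))
    (hODE : ∀ t ∈ Ioi (0 : ℝ),
      deriv (deriv T) t + (((n : ℝ) - 1) * deriv S t / S t - deriv φ t) * deriv T t
        - ((n : ℝ) - 1) / (S t) ^ 2 * T t = 0)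
    (hT0 : T 0 = 0) (hT0' : deriv T 0 = 1)
    (hTpos : ∀ t ∈ Ioi (0 : ℝ), 0 < T t) (hT'pos : ∀ t ∈ Ioi (0 : ℝ), 0 < deriv T t)
    (G : ℝ → ℝ)
    (hG : ∀ t, G t = deriv (fun s => (T s) ^ 2) t
        + ((n : ℝ) - 1) * (deriv S t / S t) * (T t) ^ 2 - (T t) ^ 2 * deriv φ t) :
    (∀ t ∈ Ioi (0 : ℝ),
      deriv G t = 2 * (deriv T t) ^ 2 + ((n : ℝ) - 1) * (T t) ^ 2 / (S t) ^ 2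
          - (T t) ^ 2 * deriv (deriv φ) t
        ∧ 0 ≤ deriv G t) ∧ MonotoneOn G (Ioi 0) := by
  have hc1 : (1:ℝ) ≤ (n:ℝ) - 1 := by
    have : (2:ℝ) ≤ (n:ℝ) := by exact_mod_cast hn
    linarith
  -- S facts
  obtain ⟨hSat, hS'at, hSkey, hSpos⟩ :
      (∀ t : ℝ, HasDerivAt S (deriv S t) t) ∧
      (∀ t : ℝ, HasDerivAt (deriv S) (deriv (deriv S) t) t) ∧
      (∀ t : ℝ, S t * deriv (deriv S) t - deriv S t * deriv S t = -1) ∧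
      (∀ t : ℝ, 0 < t → 0 < S t) := by
    rcases hS with ⟨_, rfl⟩ | ⟨_, rfl⟩
    · have hd : deriv (fun t : ℝ => t) = fun _ => (1:ℝ) := by
        funext x; simp
      refine ⟨?_, ?_, ?_, fun t ht => ht⟩
      · intro t; rw [hd]; exact hasDerivAt_id' t
      · intro t; rw [hd]
        simpa using (hasDerivAt_const t (1:ℝ))
      · intro t; rw [hd]; simp
    · have hd : deriv Real.sinh = Real.cosh := Real.deriv_sinh
      refine ⟨?_, ?_, ?_, fun t ht => Real.sinh_pos_iff.2 ht⟩
      · intro t; rw [hd]; exact Real.hasDerivAt_sinh t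
      · intro t; rw [hd, Real.deriv_cosh]; exact Real.hasDerivAt_cosh t
      · intro t; rw [hd, Real.deriv_cosh]
        nlinarith [Real.cosh_sq t]
  -- T and φ differentiability on Ioi 0
  have hT2 : ContDiffOn ℝ 2 T (Ioi 0) := hT.mono Ioi_subset_Ici_self
  have hφ2 : ContDiffOn ℝ 2 φ (Ioi 0) := hφ.mono Ioi_subset_Ici_self
  have hTdiff : DifferentiableOn ℝ T (Ioi 0) := hT2.differentiableOn two_ne_zero
  have hφdiff : DifferentiableOn ℝ φ (Ioi 0) := hφ2.differentiableOn two_ne_zero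
  have hT'cd : ContDiffOn ℝ 1 (deriv T) (Ioi 0) :=
    hT2.deriv_of_isOpen isOpen_Ioi (by norm_num)
  have hφ'cd : ContDiffOn ℝ 1 (deriv φ) (Ioi 0) :=
    hφ2.deriv_of_isOpen isOpen_Ioi (by norm_num)
  have hT'diff : DifferentiableOn ℝ (deriv T) (Ioi 0) := hT'cd.differentiableOn one_ne_zero
  have hφ'diff : DifferentiableOn ℝ (deriv φ) (Ioi 0) := hφ'cd.differentiableOn one_ne_zero
  set F : ℝ → ℝ := fun s =>
    2 * T s * deriv T s + ((n : ℝ) - 1) * (deriv S s / S s) * (T s) ^ 2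
      - (T s) ^ 2 * deriv φ s with hF_def
  have hGF : ∀ s ∈ Ioi (0:ℝ), G s = F s := by
    intro s hs
    have hmem : Ioi (0:ℝ) ∈ nhds s := Ioi_mem_nhds hs
    have hTs : HasDerivAt T (deriv T s) s := (hTdiff.differentiableAt hmem).hasDerivAt
    have hpow : deriv (fun u => (T u) ^ 2) s = 2 * T s * deriv T s := by
      have : deriv (fun u => (T u) ^ 2) s = _ := (hTs.pow 2).deriv
      simpa [pow_one] using this
    rw [hG, hpow]
  have key : ∀ t ∈ Ioi (0:ℝ),
      HasDerivAt G (2 * (deriv T t) ^ 2 + ((n : ℝ) - 1) * (T t) ^ 2 / (S t) ^ 2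
          - (T t) ^ 2 * deriv (deriv φ) t) t := by
    intro t ht
    have ht0 : (0:ℝ) < t := ht
    have hmem : Ioi (0:ℝ) ∈ nhds t := Ioi_mem_nhds ht0
    have hSne : S t ≠ 0 := (hSpos t ht0).ne'
    have hTat : HasDerivAt T (deriv T t) t := (hTdiff.differentiableAt hmem).hasDerivAt
    have hT'at : HasDerivAt (deriv T) (deriv (deriv T) t) t :=
      (hT'diff.differentiableAt hmem).hasDerivAt
    have hφat : HasDerivAt φ (deriv φ t) t := (hφdiff.differentiableAt hmem).hasDerivAt
    have hφ'at : HasDerivAt (deriv φ) (deriv (deriv φ) t) t :=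
      (hφ'diff.differentiableAt hmem).hasDerivAt
    have h1 : HasDerivAt (fun s => 2 * T s * deriv T s)
        (2 * deriv T t * deriv T t + 2 * T t * deriv (deriv T) t) t := by
      have : HasDerivAt (fun s => 2 * T s * deriv T s) _ t := (hTat.const_mul (2:ℝ)).mul hT'at
      convert this using 1
    have hq : HasDerivAt (fun s => deriv S s / S s)
        ((deriv (deriv S) t * S t - deriv S t * deriv S t) / (S t) ^ 2) t :=
      (hS'at t).div (hSat t) hSne
    have h2 : HasDerivAt (fun s => ((n : ℝ) - 1) * (deriv S s / S s) * (T s) ^ 2)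
        (((n : ℝ) - 1) * ((deriv (deriv S) t * S t - deriv S t * deriv S t) / (S t) ^ 2)
            * (T t) ^ 2
          + ((n : ℝ) - 1) * (deriv S t / S t) * (2 * T t * deriv T t)) t := by
      have : HasDerivAt (fun s => ((n : ℝ) - 1) * (deriv S s / S s) * (T s) ^ 2) _ t :=
        (hq.const_mul ((n:ℝ) - 1)).mul (hTat.pow 2)
      convert this using 1
      ring
    have h3 : HasDerivAt (fun s => (T s) ^ 2 * deriv φ s)
        (2 * T t * deriv T t * deriv φ t + (T t) ^ 2 * deriv (deriv φ) t) t := by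
      have : HasDerivAt (fun s => (T s) ^ 2 * deriv φ s) _ t := (hTat.pow 2).mul hφ'at
      convert this using 1
      simp only [Pi.pow_apply]
      ring
    have hF : HasDerivAt F
        ((2 * deriv T t * deriv T t + 2 * T t * deriv (deriv T) t)
          + (((n : ℝ) - 1) * ((deriv (deriv S) t * S t - deriv S t * deriv S t) / (S t) ^ 2)
                * (T t) ^ 2
              + ((n : ℝ) - 1) * (deriv S t / S t) * (2 * T t * deriv T t))
          - (2 * T t * deriv T t * deriv φ t + (T t) ^ 2 * deriv (deriv φ) t)) t :=
      (h1.add h2).sub h3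
    have hev : G =ᶠ[nhds t] F := Filter.eventuallyEq_of_mem hmem hGF
    have hGat := hF.congr_of_eventuallyEq hev
    have hT'' : deriv (deriv T) t
        = -((((n : ℝ) - 1) * deriv S t / S t - deriv φ t) * deriv T t)
          + ((n : ℝ) - 1) / (S t) ^ 2 * T t := by
      have := hODE t ht
      linarith
    have hk := hSkey t
    have hDE : (2 * deriv T t * deriv T t + 2 * T t * deriv (deriv T) t)
          + (((n : ℝ) - 1) * ((deriv (deriv S) t * S t - deriv S t * deriv S t) / (S t) ^ 2)
                * (T t) ^ 2
              + ((n : ℝ) - 1) * (deriv S t / S t) * (2 * T t * deriv T t))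
          - (2 * T t * deriv T t * deriv φ t + (T t) ^ 2 * deriv (deriv φ) t)
        = 2 * (deriv T t) ^ 2 + ((n : ℝ) - 1) * (T t) ^ 2 / (S t) ^ 2
          - (T t) ^ 2 * deriv (deriv φ) t := by
      have hk' : deriv (deriv S) t * S t - deriv S t * deriv S t = -1 := by
        rw [mul_comm (deriv (deriv S) t) (S t)]; exact hk
      rw [hT'', hk']
      field_simp
      ring
    rwa [hDE] at hGat
  constructor
  · intro t ht
    have hd := (key t ht).deriv
    refine ⟨hd, ?_⟩
    rw [hd]
    have hp2 : (0:ℝ) ≤ ((n : ℝ) - 1) * (T t) ^ 2 / (S t) ^ 2 :=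
      div_nonneg (mul_nonneg (by linarith) (sq_nonneg _)) (sq_nonneg _)
    have hp3 : (T t) ^ 2 * deriv (deriv φ) t ≤ 0 :=
      mul_nonpos_of_nonneg_of_nonpos (sq_nonneg _) (hφ'' t (le_of_lt ht))
    nlinarith [sq_nonneg (deriv T t)]
  · refine monotoneOn_of_deriv_nonneg (convex_Ioi 0) ?_ ?_ ?_
    · intro t ht
      exact ((key t ht).differentiableAt).continuousAt.continuousWithinAt
    · intro t ht
      rw [interior_Ioi] at ht
      exact ((key t ht).differentiableAt).differentiableWithinAt
    · intro t ht
      rw [interior_Ioi] at ht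
      rw [(key t ht).deriv]
      have hp2 : (0:ℝ) ≤ ((n : ℝ) - 1) * (T t) ^ 2 / (S t) ^ 2 :=
        div_nonneg (mul_nonneg (by linarith) (sq_nonneg _)) (sq_nonneg _)
      have hp3 : (T t) ^ 2 * deriv (deriv φ) t ≤ 0 :=
        mul_nonpos_of_nonneg_of_nonpos (sq_nonneg _) (hφ'' t (le_of_lt ht))
      nlinarith [sq_nonneg (deriv T t)]
end

section
/- Let n ≥ 2, κ ∈ {0, −1}, and φ : [0,∞) → ℝ be C² with φ' ≤ 0. Let T be the solution of T'' + ((n−1)C_κ/S_κ − φ')T' − (n−1)S_κ^{−2}T = 0, T(0) = 0, T'(0) = 1, with T > 0 and T' > 0 on (0,∞). Define H(t) = (T'(t))² + (n−1)T²(t)/S_κ²(t). Then H'(t) = −(2(n−1)/S_κ³(t))·[C_κ(t)S_κ²(t)(T'(t))² − 2S_κ(t)T(t)T'(t) + C_κ(t)T²(t)] + 2(T'(t))²φ'(t) ≤ 0 for all t > 0, so H is non-increasing on (0,∞). -/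
/-!
Differentiating `H` and eliminating `T''` with the ODE, the `φ'`-free part of `H'` is
`-(2(n-1)/S³)` times `C S² T'² - 2 S T T' + C T²`. Since `C = S' ≥ 1` for both model functions,
this bracket dominates `(S T' - T)² ≥ 0`, and `φ' ≤ 0` makes the remaining term `2 T'² φ'`
nonpositive as well.
-/

open Set

section ModelFunction

variable {S : ℝ → ℝ}

lemma differentiable_of_id_or_sinh (hS : S = (fun t => t) ∨ S = Real.sinh) :
    Differentiable ℝ S := by
  rcases hS with rfl | rfl
  exacts [differentiable_id, Real.differentiable_sinh]

lemma pos_of_id_or_sinh (hS : S = (fun t => t) ∨ S = Real.sinh) {t : ℝ} (ht : 0 < t) :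
    0 < S t := by
  rcases hS with rfl | rfl
  exacts [ht, Real.sinh_pos_iff.2 ht]

lemma one_le_deriv_of_id_or_sinh (hS : S = (fun t => t) ∨ S = Real.sinh) (t : ℝ) :
    1 ≤ deriv S t := by
  rcases hS with rfl | rfl
  · simp
  · rw [Real.deriv_sinh]
    exact Real.one_le_cosh t

end ModelFunction

lemma sq_sub_le_bracket {C s x y : ℝ} (hC : 1 ≤ C) :
    (s * y - x) ^ 2 ≤ C * s ^ 2 * y ^ 2 - 2 * s * x * y + C * x ^ 2 := by
  nlinarith [mul_nonneg (sub_nonneg.2 hC) (add_nonneg (sq_nonneg (s * y)) (sq_nonneg x))]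

lemma hasDerivAt_energy {T S φ : ℝ → ℝ} {c t : ℝ} (hSt : S t ≠ 0)
    (hS : DifferentiableAt ℝ S t) (hT : DifferentiableAt ℝ T t)
    (hT' : DifferentiableAt ℝ (deriv T) t)
    (hODE : deriv (deriv T) t + (c * deriv S t / S t - deriv φ t) * deriv T t
        - c / (S t) ^ 2 * T t = 0) :
    HasDerivAt (fun u => (deriv T u) ^ 2 + c * (T u) ^ 2 / (S u) ^ 2)
      (-(2 * c / (S t) ^ 3)
          * (deriv S t * (S t) ^ 2 * (deriv T t) ^ 2 - 2 * S t * T t * deriv T t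
             + deriv S t * (T t) ^ 2)
        + 2 * (deriv T t) ^ 2 * deriv φ t) t := by
  have hsum := (hT'.hasDerivAt.fun_pow 2).fun_add
    (((hT.hasDerivAt.fun_pow 2).const_mul c).fun_div (hS.hasDerivAt.fun_pow 2)
      (pow_ne_zero 2 hSt))
  refine hsum.congr_deriv ?_
  have hT'' : deriv (deriv T) t
      = c / (S t) ^ 2 * T t - (c * deriv S t / S t - deriv φ t) * deriv T t := by
    linear_combination hODE
  rw [hT'']
  field_simp
  ring

lemma energy_deriv_nonpos {c s C x y p : ℝ} (hc : 0 ≤ c) (hs : 0 < s) (hC : 1 ≤ C)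
    (hp : p ≤ 0) :
    -(2 * c / s ^ 3) * (C * s ^ 2 * y ^ 2 - 2 * s * x * y + C * x ^ 2) + 2 * y ^ 2 * p ≤ 0 := by
  have hbracket : 0 ≤ C * s ^ 2 * y ^ 2 - 2 * s * x * y + C * x ^ 2 :=
    (sq_nonneg _).trans (sq_sub_le_bracket hC)
  have hfirst : 0 ≤ 2 * c / s ^ 3 * (C * s ^ 2 * y ^ 2 - 2 * s * x * y + C * x ^ 2) := by
    positivity
  nlinarith [mul_nonpos_of_nonneg_of_nonpos (sq_nonneg y) hp]

theorem H_antitone_general (n : ℕ) (hn : 2 ≤ n) (κ : ℝ) (S : ℝ → ℝ)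
    (hS : (κ = 0 ∧ S = fun t => t) ∨ (κ = -1 ∧ S = Real.sinh))
    (φ : ℝ → ℝ)
    (hφ' : ∀ t ≥ (0 : ℝ), deriv φ t ≤ 0)
    (T : ℝ → ℝ) (hT : ContDiffOn ℝ 2 T (Ici 0))
    (hODE : ∀ t ∈ Ioi (0 : ℝ),
      deriv (deriv T) t + (((n : ℝ) - 1) * deriv S t / S t - deriv φ t) * deriv T t
        - ((n : ℝ) - 1) / (S t) ^ 2 * T t = 0)
    (H : ℝ → ℝ)
    (hH : ∀ t, H t = (deriv T t) ^ 2 + ((n : ℝ) - 1) * (T t) ^ 2 / (S t) ^ 2) :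
    (∀ t ∈ Ioi (0 : ℝ),
      deriv H t = -(2 * ((n : ℝ) - 1) / (S t) ^ 3)
            * (deriv S t * (S t) ^ 2 * (deriv T t) ^ 2 - 2 * S t * T t * deriv T t
               + deriv S t * (T t) ^ 2)
          + 2 * (deriv T t) ^ 2 * deriv φ t
        ∧ deriv H t ≤ 0) ∧ AntitoneOn H (Ioi 0) := by
  have hS : S = (fun t => t) ∨ S = Real.sinh := hS.imp And.right And.right
  have hc : (0 : ℝ) ≤ n - 1 := by
    have : (2 : ℝ) ≤ n := by exact_mod_cast hn
    linarith
  have hT₀ : ContDiffOn ℝ 2 T (Ioi 0) := hT.mono Ioi_subset_Ici_self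
  have hTd : DifferentiableOn ℝ T (Ioi 0) := hT₀.differentiableOn (by norm_num)
  have hT'd : DifferentiableOn ℝ (deriv T) (Ioi 0) :=
    (hT₀.deriv_of_isOpen isOpen_Ioi le_rfl).differentiableOn one_ne_zero
  have hH' : ∀ t ∈ Ioi (0 : ℝ), HasDerivAt H
      (-(2 * ((n : ℝ) - 1) / (S t) ^ 3)
          * (deriv S t * (S t) ^ 2 * (deriv T t) ^ 2 - 2 * S t * T t * deriv T t
             + deriv S t * (T t) ^ 2)
        + 2 * (deriv T t) ^ 2 * deriv φ t) t := fun t ht => by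
    rw [funext hH]
    exact hasDerivAt_energy (pos_of_id_or_sinh hS ht).ne'
      ((differentiable_of_id_or_sinh hS) t) (hTd.differentiableAt (isOpen_Ioi.mem_nhds ht))
      (hT'd.differentiableAt (isOpen_Ioi.mem_nhds ht)) (hODE t ht)
  have hnonpos : ∀ t ∈ Ioi (0 : ℝ), deriv H t ≤ 0 := fun t ht => by
    rw [(hH' t ht).deriv]
    exact energy_deriv_nonpos hc (pos_of_id_or_sinh hS ht) (one_le_deriv_of_id_or_sinh hS t)
      (hφ' t ht.le)
  refine ⟨fun t ht => ⟨(hH' t ht).deriv, hnonpos t ht⟩, ?_⟩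
  refine antitoneOn_of_deriv_nonpos (convex_Ioi 0)
    (fun t ht => (hH' t ht).continuousAt.continuousWithinAt) ?_ ?_ <;> rw [interior_Ioi]
  exacts [fun t ht => (hH' t ht).differentiableAt.differentiableWithinAt, hnonpos]

theorem H_antitone (n : ℕ) (hn : 2 ≤ n) (κ : ℝ) (S : ℝ → ℝ)
    (hS : (κ = 0 ∧ S = fun t => t) ∨ (κ = -1 ∧ S = Real.sinh))
    (φ : ℝ → ℝ) (hφ : ContDiffOn ℝ 2 φ (Ici 0))
    (hφ' : ∀ t ≥ (0 : ℝ), deriv φ t ≤ 0)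
    (T : ℝ → ℝ) (hT : ContDiffOn ℝ 2 T (Ici 0))
    (hODE : ∀ t ∈ Ioi (0 : ℝ),
      deriv (deriv T) t + (((n : ℝ) - 1) * deriv S t / S t - deriv φ t) * deriv T t
        - ((n : ℝ) - 1) / (S t) ^ 2 * T t = 0)
    (hT0 : T 0 = 0) (hT0' : deriv T 0 = 1)
    (hTpos : ∀ t ∈ Ioi (0 : ℝ), 0 < T t) (hT'pos : ∀ t ∈ Ioi (0 : ℝ), 0 < deriv T t)
    (H : ℝ → ℝ)
    (hH : ∀ t, H t = (deriv T t) ^ 2 + ((n : ℝ) - 1) * (T t) ^ 2 / (S t) ^ 2) :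
    (∀ t ∈ Ioi (0 : ℝ),
      deriv H t = -(2 * ((n : ℝ) - 1) / (S t) ^ 3)
            * (deriv S t * (S t) ^ 2 * (deriv T t) ^ 2 - 2 * S t * T t * deriv T t
               + deriv S t * (T t) ^ 2)
          + 2 * (deriv T t) ^ 2 * deriv φ t
        ∧ deriv H t ≤ 0) ∧ AntitoneOn H (Ioi 0) :=
  H_antitone_general n hn κ S hS φ hφ' T hT hODE H hH
end
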